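/- arXiv:1609.05314 — 7 statements merged into one kernel-verified Lean document; each statement's English description precedes it below -/
import Mathlib

section
/- Let δ ∈ (0,1), a > 0 and A > 0 be real numbers. Define B(χ) = a·χ^δ, C(χ) = a·I(χ,δ), and ρ(χ) = (e^{B(χ)−C(χ)} − 1)/√((e^A − 1)(e^{B(χ)} − 1)) for χ > 0. Then ρ(χ) → 0 as χ → 0⁺. -/
open Real Filter Set MeasureTheory

/-- `Ifun u δ = δ·∫₀ᵘ t^δ/(1+t) dt`. -/
noncomputable def Ifun (u δ : ℝ) : ℝ := δ * ∫ t in (0:ℝ)..u, t ^ δ / (1 + t)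

/-!
For `0 < χ < 1` the integrand of `I(χ, δ)` is at most `1`, so `0 ≤ C(χ) ≤ a χ ≤ B(χ)`. Hence
`0 ≤ e^{B - C} - 1 ≤ e^B - 1`, and dividing by `√((e^A - 1)(e^B - 1))` squeezes `ρ(χ)` between
`0` and `√((e^B - 1)/(e^A - 1))`, which tends to `0` because `B(χ) = a χ^δ → 0`.
-/

lemma Ifun_nonneg {u δ : ℝ} (hu : 0 ≤ u) (hδ : 0 ≤ δ) : 0 ≤ Ifun u δ :=
  mul_nonneg hδ <| intervalIntegral.integral_nonneg hu fun t ht =>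
    div_nonneg (rpow_nonneg ht.1 δ) (by linarith [ht.1])

lemma Ifun_le_rpow {u δ : ℝ} (hu : 0 ≤ u) (hu1 : u ≤ 1) (hδ0 : 0 ≤ δ) (hδ1 : δ ≤ 1) :
    Ifun u δ ≤ u ^ δ := by
  have hintegrand : ∀ t ∈ uIoc 0 u, ‖t ^ δ / (1 + t)‖ ≤ 1 := by
    intro t ht
    rw [uIoc_of_le hu] at ht
    have ht0 : 0 ≤ t := ht.1.le
    rw [norm_of_nonneg (div_nonneg (rpow_nonneg ht0 δ) (by linarith)), div_le_one (by linarith)]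
    linarith [rpow_le_one ht0 (ht.2.trans hu1) hδ0]
  calc Ifun u δ ≤ |δ| * ‖∫ t in (0:ℝ)..u, t ^ δ / (1 + t)‖ := by
        rw [Ifun, ← Real.norm_eq_abs, ← norm_mul]; exact le_norm_self _
    _ ≤ 1 * (1 * |u - 0|) := by
        gcongr
        · exact abs_le.2 ⟨by linarith, hδ1⟩
        · exact intervalIntegral.norm_integral_le_of_norm_le_const hintegrand
    _ ≤ u ^ δ := by
        rw [sub_zero, abs_of_nonneg hu, one_mul, one_mul]
        exact self_le_rpow_of_le_one hu hu1 hδ1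

lemma exp_sub_sub_one_div_sqrt_nonneg {b c p : ℝ} (hcb : c ≤ b) :
    0 ≤ (exp (b - c) - 1) / √(p * (exp b - 1)) :=
  div_nonneg (sub_nonneg.2 (one_le_exp (sub_nonneg.2 hcb))) (sqrt_nonneg _)

lemma exp_sub_sub_one_div_sqrt_le {b c p : ℝ} (hp : 0 < p) (hc : 0 ≤ c) (hcb : c ≤ b) :
    (exp (b - c) - 1) / √(p * (exp b - 1)) ≤ √((exp b - 1) / p) := by
  have hb : 0 ≤ exp b - 1 := sub_nonneg.2 (one_le_exp (hc.trans hcb))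
  calc (exp (b - c) - 1) / √(p * (exp b - 1)) ≤ (exp b - 1) / √(p * (exp b - 1)) := by
        gcongr; linarith
    _ = √((exp b - 1) / p) := by
        rw [sqrt_mul hp.le, mul_comm, ← div_div, div_sqrt, sqrt_div' _ hp.le]

lemma tendsto_exp_mul_rpow_sub_one {a δ : ℝ} (hδ : 0 < δ) :
    Tendsto (fun χ : ℝ => exp (a * χ ^ δ) - 1) (nhdsWithin 0 (Ioi 0)) (nhds 0) := by
  have hcont : ContinuousAt (fun χ : ℝ => exp (a * χ ^ δ) - 1) 0 := by
    fun_prop (disch := exact Or.inr hδ.le)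
  simpa [zero_rpow hδ.ne'] using hcont.tendsto.mono_left nhdsWithin_le_nhds

theorem correlation_tendsto_zero_at_zero
    (δ a A : ℝ) (hδ : δ ∈ Set.Ioo (0:ℝ) 1) (ha : 0 < a) (hA : 0 < A)
    (B C ρ : ℝ → ℝ)
    (hB : ∀ χ, B χ = a * χ ^ δ)
    (hC : ∀ χ, C χ = a * Ifun χ δ)
    (hρ : ∀ χ, 0 < χ → ρ χ =
      (Real.exp (B χ - C χ) - 1) /
        Real.sqrt ((Real.exp A - 1) * (Real.exp (B χ) - 1))) :
    Filter.Tendsto ρ (nhdsWithin 0 (Set.Ioi 0)) (nhds 0) := by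
  obtain ⟨hδ0, hδ1⟩ := hδ
  have hp : 0 < exp A - 1 := sub_pos.2 (one_lt_exp_iff.2 hA)
  have hCB : ∀ χ ∈ Ioo (0:ℝ) 1, 0 ≤ C χ ∧ C χ ≤ B χ := fun χ hχ => by
    rw [hB, hC]
    exact ⟨mul_nonneg ha.le (Ifun_nonneg hχ.1.le hδ0.le),
      mul_le_mul_of_nonneg_left (Ifun_le_rpow hχ.1.le hχ.2.le hδ0.le hδ1.le) ha.le⟩
  have hbound : Tendsto (fun χ => √((exp (a * χ ^ δ) - 1) / (exp A - 1)))
      (nhdsWithin 0 (Ioi 0)) (nhds 0) := by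
    simpa using ((tendsto_exp_mul_rpow_sub_one hδ0).div_const (exp A - 1)).sqrt
  refine tendsto_of_tendsto_of_tendsto_of_le_of_le' tendsto_const_nhds hbound ?_ ?_ <;>
    filter_upwards [Ioo_mem_nhdsGT zero_lt_one] with χ hχ <;> rw [hρ χ hχ.1]
  · exact exp_sub_sub_one_div_sqrt_nonneg (hCB χ hχ).2
  · rw [← hB]
    exact exp_sub_sub_one_div_sqrt_le hp (hCB χ hχ).1 (hCB χ hχ).2
end

section
/- Let δ ∈ (0,1), a > 0 and A > 0 be real numbers. Define B(χ) = a·χ^δ, C(χ) = a·I(χ,δ), and ρ(χ) = (e^{B(χ)−C(χ)} − 1)/√((e^A − 1)(e^{B(χ)} − 1)) for χ > 0. Then ρ(χ) → 0 as χ → ∞. -/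
open Real Filter Set MeasureTheory

/-! Since `χ ^ δ = δ ∫₀^χ t^(δ-1) dt`, the exponent `B - C` equals
`a δ ∫₀^χ t^(δ-1)/(1+t) dt`, which stays below `a (1 + δ/(1-δ))`: bound the integrand by
`t^(δ-1)` on `[0,1]` and by `t^(δ-2)` on `[1,χ]`. So the numerator of `ρ` is bounded while its
denominator grows like `exp (a χ^δ / 2)`. -/

theorem tendsto_div_atTop_zero_of_mem_Icc {α : Type*} {l : Filter α} {f g : α → ℝ}
    {m M : ℝ} (hf : ∀ᶠ x in l, f x ∈ Icc m M) (hg : Tendsto g l atTop) :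
    Tendsto (fun x => f x / g x) l (nhds 0) := by
  refine tendsto_of_tendsto_of_tendsto_of_le_of_le' (g := fun x => m / g x)
    (h := fun x => M / g x) (tendsto_const_nhds.div_atTop hg) (tendsto_const_nhds.div_atTop hg)
    ?_ ?_ <;>
  filter_upwards [hf, hg.eventually_ge_atTop 0] with x hfx hgx
  exacts [div_le_div_of_nonneg_right hfx.1 hgx, div_le_div_of_nonneg_right hfx.2 hgx]

theorem intervalIntegrable_rpow_div_one_add {r a b : ℝ} (hr : -1 < r) (ha : 0 ≤ a)
    (hb : 0 ≤ b) : IntervalIntegrable (fun t => t ^ r / (1 + t)) volume a b := by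
  simp_rw [div_eq_mul_inv]
  refine (intervalIntegral.intervalIntegrable_rpow' hr).mul_continuousOn
    (ContinuousOn.inv₀ (by fun_prop) fun t ht => ?_)
  have : 0 ≤ t := le_trans (le_min ha hb) ht.1
  positivity

theorem rpow_sub_Ifun_eq_integral {δ χ : ℝ} (hδ : 0 < δ) (hχ : 0 ≤ χ) :
    χ ^ δ - Ifun χ δ = δ * ∫ t in (0:ℝ)..χ, t ^ (δ - 1) / (1 + t) := by
  have hpow : χ ^ δ = δ * ∫ t in (0:ℝ)..χ, t ^ (δ - 1) := by
    rw [integral_rpow (Or.inl (by linarith)), sub_add_cancel, zero_rpow hδ.ne', sub_zero]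
    field_simp
  rw [hpow, Ifun, ← mul_sub, ← intervalIntegral.integral_sub
    (intervalIntegral.intervalIntegrable_rpow' (by linarith))
    (intervalIntegrable_rpow_div_one_add (by linarith) le_rfl hχ)]
  congr 1
  refine intervalIntegral.integral_congr_uIoo fun t ht => ?_
  rw [uIoo_of_le hχ] at ht
  have ht0 : 0 < t := ht.1
  rw [rpow_sub_one ht0.ne']
  field_simp
  ring

theorem integral_zero_one_rpow_sub_one_div_one_add_le {δ : ℝ} (hδ : 0 < δ) :
    ∫ t in (0:ℝ)..1, t ^ (δ - 1) / (1 + t) ≤ 1 / δ := by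
  calc ∫ t in (0:ℝ)..1, t ^ (δ - 1) / (1 + t)
      ≤ ∫ t in (0:ℝ)..1, t ^ (δ - 1) := by
        refine intervalIntegral.integral_mono_on zero_le_one
          (intervalIntegrable_rpow_div_one_add (by linarith) le_rfl zero_le_one)
          (intervalIntegral.intervalIntegrable_rpow' (by linarith)) fun t ht => ?_
        exact div_le_self (rpow_nonneg ht.1 _) (by linarith [ht.1])
    _ = 1 / δ := by
        rw [integral_rpow (Or.inl (by linarith)), sub_add_cancel, zero_rpow hδ.ne', one_rpow,
          sub_zero]

theorem integral_one_rpow_sub_one_div_one_add_le {δ χ : ℝ} (hδ : δ < 1) (hχ : 1 ≤ χ) :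
    ∫ t in (1:ℝ)..χ, t ^ (δ - 1) / (1 + t) ≤ 1 / (1 - δ) := by
  have hχ0 : (0:ℝ) < χ := by linarith
  have h0 : (0:ℝ) ∉ uIcc 1 χ := notMem_uIcc_of_lt zero_lt_one hχ0
  calc ∫ t in (1:ℝ)..χ, t ^ (δ - 1) / (1 + t)
      ≤ ∫ t in (1:ℝ)..χ, t ^ (δ - 2) := by
        refine intervalIntegral.integral_mono_on hχ ?_
          (intervalIntegral.intervalIntegrable_rpow (Or.inr h0)) fun t ht => ?_
        · refine ContinuousOn.intervalIntegrable fun t ht => ?_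
          rw [uIcc_of_le hχ] at ht
          have ht0 : 0 < t := by linarith [ht.1]
          exact ((continuousAt_id.rpow_const (Or.inl ht0.ne')).div (by fun_prop)
            (by linarith)).continuousWithinAt
        have ht0 : 0 < t := by linarith [ht.1]
        rw [show t ^ (δ - 2) = t ^ (δ - 1) / t by rw [← rpow_sub_one ht0.ne']; ring_nf]
        exact div_le_div_of_nonneg_left (rpow_nonneg ht0.le _) ht0 (by linarith)
    _ = (1 - χ ^ (δ - 1)) / (1 - δ) := by
        rw [integral_rpow (Or.inr ⟨by linarith, h0⟩), one_rpow,
          show δ - 2 + 1 = δ - 1 by ring, ← neg_div_neg_eq, neg_sub, neg_sub]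
    _ ≤ 1 / (1 - δ) :=
        div_le_div_of_nonneg_right (by linarith [rpow_pos_of_pos hχ0 (δ - 1)]) (by linarith)

theorem rpow_sub_Ifun_le {δ χ : ℝ} (hδ : δ ∈ Ioo (0:ℝ) 1) (hχ : 1 ≤ χ) :
    χ ^ δ - Ifun χ δ ≤ 1 + δ / (1 - δ) := by
  obtain ⟨hδ0, hδ1⟩ := hδ
  rw [rpow_sub_Ifun_eq_integral hδ0 (by linarith),
    ← intervalIntegral.integral_add_adjacent_intervals (b := 1)
      (intervalIntegrable_rpow_div_one_add (by linarith) le_rfl zero_le_one)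
      (intervalIntegrable_rpow_div_one_add (by linarith) zero_le_one (by linarith))]
  calc δ * ((∫ t in (0:ℝ)..1, t ^ (δ - 1) / (1 + t)) +
        ∫ t in (1:ℝ)..χ, t ^ (δ - 1) / (1 + t))
      ≤ δ * (1 / δ + 1 / (1 - δ)) := by
        gcongr
        exacts [integral_zero_one_rpow_sub_one_div_one_add_le hδ0,
          integral_one_rpow_sub_one_div_one_add_le hδ1 hχ]
    _ = 1 + δ / (1 - δ) := by field_simp

theorem correlation_tendsto_zero_at_infty
    (δ a A : ℝ) (hδ : δ ∈ Set.Ioo (0:ℝ) 1) (ha : 0 < a) (hA : 0 < A)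
    (B C ρ : ℝ → ℝ)
    (hB : ∀ χ, B χ = a * χ ^ δ)
    (hC : ∀ χ, C χ = a * Ifun χ δ)
    (hρ : ∀ χ, 0 < χ → ρ χ =
      (Real.exp (B χ - C χ) - 1) /
        Real.sqrt ((Real.exp A - 1) * (Real.exp (B χ) - 1))) :
    Filter.Tendsto ρ Filter.atTop (nhds 0) := by
  have hexpA : 0 < exp A - 1 := sub_pos.2 (one_lt_exp_iff.2 hA)
  have hB_atTop : Tendsto (fun χ => exp (B χ) - 1) atTop atTop := by
    simp only [hB]
    exact tendsto_atTop_add_const_right _ _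
      (tendsto_exp_atTop.comp ((tendsto_rpow_atTop hδ.1).const_mul_atTop ha))
  have hnum : ∀ᶠ χ in atTop,
      exp (B χ - C χ) - 1 ∈ Icc (-1) (exp (a * (1 + δ / (1 - δ))) - 1) := by
    filter_upwards [eventually_ge_atTop 1] with χ hχ
    rw [hB, hC, ← mul_sub]
    refine ⟨by linarith [exp_pos (a * (χ ^ δ - Ifun χ δ))], ?_⟩
    gcongr
    exact rpow_sub_Ifun_le hδ hχ
  refine (tendsto_div_atTop_zero_of_mem_Icc hnum
    (tendsto_sqrt_atTop.comp (hB_atTop.const_mul_atTop hexpA))).congr' ?_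
  filter_upwards [eventually_gt_atTop 0] with χ hχ using (hρ χ hχ).symm
end

section
/- Let n be a positive natural number, α > n a real number, δ = n/α, and let λ > 0, c > 0, σ > 0, η ≥ 0, γ > 0, ν > 0 be real numbers. Define, for r > 0, f_L(r) = log(1 + σ·r^{−α}) − log(1 + ν/γ) and f_R(r) = −λ·c·κ_δ·σ^δ − σ·η + λ·c·r^n − λ·c·σ^δ·I(r^α/σ, δ). Then there exists r > 0 with f_L(r) = f_R(r) if and only if log(1 + ν/γ) > σ·η; moreover, when it exists, this solution is unique. -/
open Real Filter Set MeasureTheory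

/-- `kappa δ = δ·∫₀^∞ t^(δ-1)/(1+t) dt`. -/
noncomputable def kappa (δ : ℝ) : ℝ := δ * ∫ t in Set.Ioi (0:ℝ), t ^ (δ - 1) / (1 + t)

open Topology

/-! Since `t^δ/(1+t) = t^(δ-1) - t^(δ-1)/(1+t)`, we get `κ_δ + I(u, δ) = u^δ + δ∫_u^∞ t^(δ-1)/(1+t) dt`,
and with `u = r^α/σ` the term `σ^δ u^δ = r^n` cancels the `λ c r^n` of `f_R`. Thus
`f_L(r) - f_R(r) = log(1 + σ r^(-α)) + (σ η - log(1 + ν/γ)) + λ c σ^δ · δ∫_{r^α/σ}^∞ t^(δ-1)/(1+t) dt`,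
a continuous strictly decreasing function of `r > 0` tending to `+∞` at `0` and to
`σ η - log(1 + ν/γ)` at `∞`. It therefore has a zero iff this limit is negative, and at most one. -/

noncomputable def kappaTail (δ u : ℝ) : ℝ := δ * ∫ t in Ioi u, t ^ (δ - 1) / (1 + t)

section Integrand

variable {δ : ℝ}

lemma integrableOn_rpow_sub_one_div_one_add_Ioc (hδ : 0 < δ) (u : ℝ) :
    IntegrableOn (fun t : ℝ => t ^ (δ - 1) / (1 + t)) (Ioc 0 u) := by
  have hdom : IntegrableOn (fun t : ℝ => t ^ (δ - 1)) (Ioc 0 u) :=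
    (intervalIntegral.intervalIntegrable_rpow' (by linarith)).1
  refine hdom.mono' (by fun_prop : Measurable _).aestronglyMeasurable ?_
  filter_upwards [ae_restrict_mem measurableSet_Ioc] with t ht
  have ht0 : 0 < t := ht.1
  rw [norm_of_nonneg (by positivity)]
  exact div_le_self (by positivity) (by linarith)

lemma integrableOn_rpow_sub_one_div_one_add_Ioi (hδ0 : 0 < δ) (hδ1 : δ < 1) :
    IntegrableOn (fun t : ℝ => t ^ (δ - 1) / (1 + t)) (Ioi 0) := by
  have hdom : IntegrableOn (fun t : ℝ => t ^ (δ - 2)) (Ioi 1) :=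
    integrableOn_Ioi_rpow_of_lt (by linarith) one_pos
  have htail : IntegrableOn (fun t : ℝ => t ^ (δ - 1) / (1 + t)) (Ioi 1) := by
    refine hdom.mono' (by fun_prop : Measurable _).aestronglyMeasurable ?_
    filter_upwards [ae_restrict_mem measurableSet_Ioi] with t (ht : 1 < t)
    have ht0 : 0 < t := one_pos.trans ht
    rw [norm_of_nonneg (by positivity)]
    calc t ^ (δ - 1) / (1 + t) ≤ t ^ (δ - 1) / t := by gcongr; linarith
      _ = t ^ (δ - 2) := by rw [← rpow_sub_one ht0.ne']; ring_nf
  rw [← Ioc_union_Ioi_eq_Ioi zero_le_one]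
  exact (integrableOn_rpow_sub_one_div_one_add_Ioc hδ0 1).union htail

lemma Ifun_eq_rpow_sub (hδ : 0 < δ) {u : ℝ} (hu : 0 ≤ u) :
    Ifun u δ = u ^ δ - δ * ∫ t in (0:ℝ)..u, t ^ (δ - 1) / (1 + t) := by
  have hsplit : ∫ t in (0:ℝ)..u, t ^ δ / (1 + t)
      = ∫ t in (0:ℝ)..u, (t ^ (δ - 1) - t ^ (δ - 1) / (1 + t)) := by
    refine intervalIntegral.integral_congr_ae (ae_of_all _ fun t ht => ?_)
    have ht0 : 0 < t := (uIoc_of_le hu ▸ ht).1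
    rw [rpow_sub_one ht0.ne']
    field_simp
    ring
  rw [Ifun, hsplit, intervalIntegral.integral_sub (intervalIntegral.intervalIntegrable_rpow'
      (by linarith)) ((intervalIntegrable_iff_integrableOn_Ioc_of_le hu).2
      (integrableOn_rpow_sub_one_div_one_add_Ioc hδ u)),
    integral_rpow (Or.inl (by linarith)), sub_add_cancel, zero_rpow hδ.ne']
  field_simp
  ring

lemma kappa_add_Ifun (hδ0 : 0 < δ) (hδ1 : δ < 1) {u : ℝ} (hu : 0 ≤ u) :
    kappa δ + Ifun u δ = u ^ δ + kappaTail δ u := by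
  have hint := integrableOn_rpow_sub_one_div_one_add_Ioi hδ0 hδ1
  rw [kappa, kappaTail, Ifun_eq_rpow_sub hδ0 hu,
    ← intervalIntegral.integral_interval_add_Ioi hint (hint.mono_set (Ioi_subset_Ioi hu))]
  ring

lemma kappaTail_nonneg (hδ : 0 ≤ δ) {u : ℝ} (hu : 0 ≤ u) : 0 ≤ kappaTail δ u :=
  mul_nonneg hδ <| setIntegral_nonneg measurableSet_Ioi fun t (ht : u < t) => by
    have : 0 < t := hu.trans_lt ht
    positivity

lemma antitoneOn_kappaTail (hδ0 : 0 < δ) (hδ1 : δ < 1) : AntitoneOn (kappaTail δ) (Ici 0) := by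
  intro u (hu : 0 ≤ u) v _ huv
  have hint := (integrableOn_rpow_sub_one_div_one_add_Ioi hδ0 hδ1).mono_set (Ioi_subset_Ioi hu)
  refine mul_le_mul_of_nonneg_left (setIntegral_mono_set hint ?_
    (Ioi_subset_Ioi huv).eventuallyLE) hδ0.le
  filter_upwards [ae_restrict_mem measurableSet_Ioi] with t (ht : u < t)
  have : 0 < t := hu.trans_lt ht
  positivity

lemma continuousOn_kappaTail (hδ0 : 0 < δ) (hδ1 : δ < 1) : ContinuousOn (kappaTail δ) (Ici 0) :=
  continuousOn_const.mul
    (integrableOn_rpow_sub_one_div_one_add_Ioi hδ0 hδ1).continuousOn_Ici_primitive_Ioi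

lemma tendsto_kappaTail_atTop : Tendsto (kappaTail δ) atTop (𝓝 0) := by
  have h := (tendsto_integral_Ioi_zero (μ := volume)
    (f := fun t : ℝ => t ^ (δ - 1) / (1 + t)) tendsto_id).const_mul δ
  rwa [mul_zero] at h

end Integrand

section LogTerm

variable {α σ : ℝ}

lemma strictAntiOn_log_one_add_mul_rpow_neg (hσ : 0 < σ) (hα : 0 < α) :
    StrictAntiOn (fun r : ℝ => log (1 + σ * r ^ (-α))) (Ioi 0) := by
  intro r (hr : 0 < r) s (hs : 0 < s) hrs
  have hpow : s ^ (-α) < r ^ (-α) := rpow_lt_rpow_of_neg hr hrs (neg_neg_of_pos hα)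
  exact log_lt_log (by positivity) (by gcongr)

lemma continuousOn_log_one_add_mul_rpow_neg (hσ : 0 ≤ σ) :
    ContinuousOn (fun r : ℝ => log (1 + σ * r ^ (-α))) (Ioi 0) := by
  intro r (hr : 0 < r)
  refine ContinuousAt.continuousWithinAt ?_
  exact (continuousAt_const.add (continuousAt_const.mul
    (continuousAt_rpow_const r _ (Or.inl hr.ne')))).log (by positivity : 1 + σ * r ^ (-α) ≠ 0)

lemma tendsto_log_one_add_mul_rpow_neg_nhdsGT_zero (hσ : 0 < σ) (hα : 0 < α) :
    Tendsto (fun r : ℝ => log (1 + σ * r ^ (-α))) (𝓝[>] 0) atTop :=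
  tendsto_log_atTop.comp <| tendsto_atTop_add_const_left _ 1 <|
    (tendsto_rpow_neg_nhdsGT_zero (neg_neg_of_pos hα)).const_mul_atTop hσ

lemma tendsto_log_one_add_mul_rpow_neg_atTop (hα : 0 < α) :
    Tendsto (fun r : ℝ => log (1 + σ * r ^ (-α))) atTop (𝓝 0) := by
  have h := ((tendsto_rpow_neg_atTop hα).const_mul σ).const_add 1
  rw [mul_zero, add_zero] at h
  rw [← log_one]
  exact (continuousAt_log one_ne_zero).tendsto.comp h

end LogTerm

noncomputable def guardGap (α σ δ A ℓ r : ℝ) : ℝ :=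
  log (1 + σ * r ^ (-α)) + ℓ + A * kappaTail δ (r ^ α / σ)

section GuardGap

variable {α σ δ A ℓ : ℝ}

lemma strictAntiOn_guardGap (hα : 0 < α) (hσ : 0 < σ) (hA : 0 ≤ A) (hδ0 : 0 < δ) (hδ1 : δ < 1) :
    StrictAntiOn (guardGap α σ δ A ℓ) (Ioi 0) := by
  intro r (hr : 0 < r) s (hs : 0 < s) hrs
  have hlog : log (1 + σ * s ^ (-α)) < log (1 + σ * r ^ (-α)) :=
    strictAntiOn_log_one_add_mul_rpow_neg hσ hα hr hs hrs
  have htail : kappaTail δ (s ^ α / σ) ≤ kappaTail δ (r ^ α / σ) :=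
    antitoneOn_kappaTail hδ0 hδ1 (by positivity : 0 ≤ r ^ α / σ) (by positivity : 0 ≤ s ^ α / σ)
      (by gcongr)
  have hterm := mul_le_mul_of_nonneg_left htail hA
  simp only [guardGap]
  linarith

lemma continuousOn_guardGap (hσ : 0 < σ) (hδ0 : 0 < δ) (hδ1 : δ < 1) :
    ContinuousOn (guardGap α σ δ A ℓ) (Ioi 0) := by
  have hpow : ContinuousOn (fun r : ℝ => r ^ α / σ) (Ioi 0) := fun r (hr : 0 < r) =>
    ((continuousAt_rpow_const r α (Or.inl hr.ne')).div_const σ).continuousWithinAt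
  have hmaps : MapsTo (fun r : ℝ => r ^ α / σ) (Ioi 0) (Ici 0) := fun r (hr : 0 < r) => by
    simp only [mem_Ici]
    positivity
  exact ((continuousOn_log_one_add_mul_rpow_neg hσ.le).add continuousOn_const).add
    (continuousOn_const.mul ((continuousOn_kappaTail hδ0 hδ1).comp hpow hmaps))

lemma tendsto_guardGap_nhdsGT_zero (hα : 0 < α) (hσ : 0 < σ) (hA : 0 ≤ A) (hδ : 0 ≤ δ) :
    Tendsto (guardGap α σ δ A ℓ) (𝓝[>] 0) atTop := by
  refine (tendsto_atTop_add_const_right _ ℓ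
    (tendsto_log_one_add_mul_rpow_neg_nhdsGT_zero hσ hα)).atTop_add_zero_eventuallyLE ?_
  filter_upwards [self_mem_nhdsWithin] with r (hr : 0 < r)
  exact mul_nonneg hA (kappaTail_nonneg hδ (by positivity))

lemma tendsto_guardGap_atTop (hα : 0 < α) (hσ : 0 < σ) :
    Tendsto (guardGap α σ δ A ℓ) atTop (𝓝 ℓ) := by
  have htail := (tendsto_kappaTail_atTop (δ := δ)).comp ((tendsto_rpow_atTop hα).atTop_div_const hσ)
  unfold guardGap
  simpa using ((tendsto_log_one_add_mul_rpow_neg_atTop hα).add_const ℓ).add (htail.const_mul A)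

end GuardGap

lemma exists_pos_eq_zero_iff_of_strictAntiOn {F : ℝ → ℝ} {ℓ : ℝ}
    (hanti : StrictAntiOn F (Ioi 0)) (hcont : ContinuousOn F (Ioi 0))
    (hzero : Tendsto F (𝓝[>] 0) atTop) (htop : Tendsto F atTop (𝓝 ℓ)) :
    (∃ r, 0 < r ∧ F r = 0) ↔ ℓ < 0 := by
  constructor
  · rintro ⟨r, hr, hFr⟩
    have hr1 : 0 < r + 1 := by linarith
    have hneg : F (r + 1) < 0 := hFr ▸ hanti hr hr1 (lt_add_one r)
    have hle : ℓ ≤ F (r + 1) := le_of_tendsto htop <| by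
      filter_upwards [eventually_ge_atTop (r + 1)] with s hs
      exact hanti.antitoneOn hr1 (hr1.trans_le hs) hs
    linarith
  · intro hℓ
    obtain ⟨a, hFa, ha⟩ := ((hzero.eventually_gt_atTop 0).and self_mem_nhdsWithin).exists
    obtain ⟨b, hFb, hb⟩ := ((htop.eventually_lt_const hℓ).and (eventually_gt_atTop 0)).exists
    obtain ⟨r, hr, hFr⟩ := isPreconnected_Ioi.intermediate_value (show b ∈ Ioi 0 from hb) ha
      hcont ⟨hFb.le, hFa.le⟩
    exact ⟨r, hr, hFr⟩

theorem optimal_guard_zone_exists_iff_unique_general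
    (n : ℕ) (hn : 0 < n) (α : ℝ) (hα : (n : ℝ) < α) (δ : ℝ) (hδ : δ = (n : ℝ) / α)
    (lam c σ η γ ν : ℝ) (hlam : 0 < lam) (hc : 0 < c) (hσ : 0 < σ)
    (fL fR : ℝ → ℝ)
    (hfL : ∀ r, 0 < r → fL r = Real.log (1 + σ * r ^ (-α)) - Real.log (1 + ν / γ))
    (hfR : ∀ r, 0 < r → fR r =
      -(lam * c * kappa δ * σ ^ δ) - σ * η + lam * c * r ^ (n : ℝ)
        - lam * c * σ ^ δ * Ifun (r ^ α / σ) δ) :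
    ((∃ r, 0 < r ∧ fL r = fR r) ↔ σ * η < Real.log (1 + ν / γ)) ∧
    (∀ r₁ r₂, 0 < r₁ → 0 < r₂ → fL r₁ = fR r₁ → fL r₂ = fR r₂ → r₁ = r₂) := by
  have hn0 : (0 : ℝ) < n := Nat.cast_pos.2 hn
  have hα0 : 0 < α := hn0.trans hα
  have hδ0 : 0 < δ := hδ ▸ div_pos hn0 hα0
  have hδ1 : δ < 1 := hδ ▸ (div_lt_one hα0).2 hα
  have hA : 0 ≤ lam * c * σ ^ δ := by positivity
  set F := guardGap α σ δ (lam * c * σ ^ δ) (σ * η - log (1 + ν / γ))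
  have hanti : StrictAntiOn F (Ioi 0) := strictAntiOn_guardGap hα0 hσ hA hδ0 hδ1
  have hroot : ∀ r, 0 < r → (fL r = fR r ↔ F r = 0) := by
    intro r hr
    have hu : 0 ≤ r ^ α / σ := by positivity
    have hpow : σ ^ δ * (r ^ α / σ) ^ δ = r ^ (n : ℝ) := by
      rw [div_rpow (by positivity) hσ.le, ← rpow_mul hr.le, hδ, mul_div_cancel₀ _ hα0.ne']
      field_simp
    have hgap : fL r - fR r = F r := by
      rw [hfL r hr, hfR r hr]
      simp only [F, guardGap]
      linear_combination lam * c * σ ^ δ * kappa_add_Ifun hδ0 hδ1 hu + lam * c * hpow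
    rw [← sub_eq_zero, hgap]
  refine ⟨?_, fun r₁ r₂ h₁ h₂ e₁ e₂ => hanti.injOn h₁ h₂ ?_⟩
  · calc (∃ r, 0 < r ∧ fL r = fR r) ↔ ∃ r, 0 < r ∧ F r = 0 :=
          exists_congr fun r => and_congr_right (hroot r)
      _ ↔ σ * η - log (1 + ν / γ) < 0 :=
          exists_pos_eq_zero_iff_of_strictAntiOn hanti (continuousOn_guardGap hσ hδ0 hδ1)
            (tendsto_guardGap_nhdsGT_zero hα0 hσ hA hδ0.le) (tendsto_guardGap_atTop hα0 hσ)
      _ ↔ σ * η < log (1 + ν / γ) := sub_neg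
  · rw [(hroot r₁ h₁).1 e₁, (hroot r₂ h₂).1 e₂]

theorem optimal_guard_zone_exists_iff_unique
    (n : ℕ) (hn : 0 < n) (α : ℝ) (hα : (n : ℝ) < α) (δ : ℝ) (hδ : δ = (n : ℝ) / α)
    (lam c σ η γ ν : ℝ) (hlam : 0 < lam) (hc : 0 < c) (hσ : 0 < σ) (hη : 0 ≤ η)
    (hγ : 0 < γ) (hν : 0 < ν)
    (fL fR : ℝ → ℝ)
    (hfL : ∀ r, 0 < r → fL r = Real.log (1 + σ * r ^ (-α)) - Real.log (1 + ν / γ))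
    (hfR : ∀ r, 0 < r → fR r =
      -(lam * c * kappa δ * σ ^ δ) - σ * η + lam * c * r ^ (n : ℝ)
        - lam * c * σ ^ δ * Ifun (r ^ α / σ) δ) :
    ((∃ r, 0 < r ∧ fL r = fR r) ↔ σ * η < Real.log (1 + ν / γ)) ∧
    (∀ r₁ r₂, 0 < r₁ → 0 < r₂ → fL r₁ = fR r₁ → fL r₂ = fR r₂ → r₁ = r₂) :=
  optimal_guard_zone_exists_iff_unique_general n hn α hα δ hδ lam c σ η γ ν hlam hc hσ fL fR hfL hfR
end

section
/- Let n be a positive natural number, α > n a real number, δ = n/α, and let λ > 0, c > 0, σ > 0, η ≥ 0 be real numbers. Let c₀₀, c₀₁, c₁₀, c₁₁ ≥ 0 satisfy c₁₀ > c₀₀ and c₀₁ > c₁₁. Define A = λ·c·κ_δ·σ^δ + σ·η, B(r) = λ·c·r^n, C(r) = λ·c·σ^δ·I(r^α/σ, δ), and the Bayes risk R(r) = c₀₀ + (c₀₁ − c₀₀)·e^{−A} + (c₁₀ − c₀₀)·e^{−B(r)} + (c₁₁ + c₀₀ − c₁₀ − c₀₁)·e^{−A−C(r)} for r > 0. Then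 R is quasiconvex on (0,∞). -/
open Real Filter Set MeasureTheory

/-! With `w r = r^α / (σ + r^α)` the chain rule gives `C' = B' · w`, hence
`R' = B' e^{-B} (d · w e^{B - C - A} - a)` with `a = c₁₀ - c₀₀ ≥ 0` and `d = c₁₀ + c₀₁ - c₀₀ - c₁₁`.
As `0 ≤ w ≤ 1` increases and `(B - C)' = B' (1 - w) ≥ 0`, the product `w e^{B - C}` is nonnegative
and increasing, so once the bracket is positive it stays nonnegative (this forces `d > 0`).
Thus `R'` changes sign at most once, from negative to positive: `R` decreases, then increases. -/

theorem quasiconvexOn_of_hasDerivAt {s : Set ℝ} (hs : Convex ℝ s) {f f' : ℝ → ℝ}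
    (hf : ∀ x ∈ s, HasDerivAt f (f' x) x)
    (hf' : ∀ x ∈ s, ∀ y ∈ s, x ≤ y → 0 < f' x → 0 ≤ f' y) : QuasiconvexOn ℝ s f := by
  have hsub : ∀ {a b}, a ∈ s → b ∈ s → Icc a b ⊆ s := fun ha hb => hs.ordConnected.out ha hb
  have hcont : ∀ {a b}, a ∈ s → b ∈ s → ContinuousOn f (Icc a b) := fun ha hb =>
    HasDerivAt.continuousOn fun x hx => hf x (hsub ha hb hx)
  have hderiv : ∀ {a b}, a ∈ s → b ∈ s →
      ∀ x ∈ interior (Icc a b), HasDerivWithinAt f (f' x) (interior (Icc a b)) x :=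
    fun ha hb x hx => (hf x (hsub ha hb (interior_subset hx))).hasDerivWithinAt
  refine fun r => convex_iff_ordConnected.2 ⟨fun x hx y hy p hp => ⟨hsub hx.1 hy.1 hp, ?_⟩⟩
  have hps : p ∈ s := hsub hx.1 hy.1 hp
  by_cases hpos : ∃ t ∈ Icc x p, 0 < f' t
  · obtain ⟨t, ht, hft⟩ := hpos
    have hmono : MonotoneOn f (Icc p y) :=
      monotoneOn_of_hasDerivWithinAt_nonneg (convex_Icc p y) (hcont hps hy.1) (hderiv hps hy.1)
        fun u hu => by
          rw [interior_Icc] at hu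
          exact hf' t (hsub hx.1 hps ht) u (hsub hps hy.1 (Ioo_subset_Icc_self hu))
            (ht.2.trans hu.1.le) hft
    exact (hmono ⟨le_rfl, hp.2⟩ ⟨hp.2, le_rfl⟩ hp.2).trans hy.2
  · push Not at hpos
    have hanti : AntitoneOn f (Icc x p) :=
      antitoneOn_of_hasDerivWithinAt_nonpos (convex_Icc x p) (hcont hx.1 hps) (hderiv hx.1 hps)
        fun u hu => hpos u (interior_subset hu)
    exact (hanti ⟨le_rfl, hp.1⟩ ⟨hp.1, le_rfl⟩ hp.1).trans hx.2

theorem quasiconvexOn_add_mul_exp_sub_mul_exp {s : Set ℝ} (hs : Convex ℝ s)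
    {B C w β : ℝ → ℝ} (hB : ∀ x ∈ s, HasDerivAt B (β x) x)
    (hC : ∀ x ∈ s, HasDerivAt C (β x * w x) x) (hβ : ∀ x ∈ s, 0 ≤ β x)
    (hw₀ : ∀ x ∈ s, 0 ≤ w x) (hw₁ : ∀ x ∈ s, w x ≤ 1) (hw : MonotoneOn w s)
    (k : ℝ) {a : ℝ} (ha : 0 ≤ a) (d : ℝ) :
    QuasiconvexOn ℝ s (fun x => k + a * exp (-B x) - d * exp (-C x)) := by
  have hBC : MonotoneOn (fun x => B x - C x) s :=
    monotoneOn_of_hasDerivWithinAt_nonneg hs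
      (HasDerivAt.continuousOn fun x hx => (hB x hx).sub (hC x hx))
      (fun x hx => ((hB x (interior_subset hx)).sub (hC x (interior_subset hx))).hasDerivWithinAt)
      fun x hx => by
        have hx := interior_subset hx
        nlinarith [hβ x hx, hw₁ x hx]
  set g : ℝ → ℝ := fun x => w x * exp (B x - C x)
  have hg : MonotoneOn g s := fun x hx y hy hxy =>
    mul_le_mul (hw hx hy hxy) (exp_le_exp.2 (hBC hx hy hxy)) (exp_pos _).le (hw₀ y hy)
  refine quasiconvexOn_of_hasDerivAt hs (f' := fun x => β x * exp (-B x) * (d * g x - a))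
    (fun x hx => ?_) fun x hx y hy hxy hpos => ?_
  · have hexp : exp (-B x) * exp (B x - C x) = exp (-C x) := by rw [← exp_add]; ring_nf
    refine ((((hB x hx).neg.exp.const_mul a).const_add k).sub
      ((hC x hx).neg.exp.const_mul d)).congr_deriv ?_
    simp only [Pi.neg_apply]
    linear_combination -(β x * d * w x) * hexp
  · have hβx : 0 ≤ β x * exp (-B x) := mul_nonneg (hβ x hx) (exp_pos _).le
    have hax : a < d * g x := by linarith [pos_of_mul_pos_right hpos hβx]
    have hgx : 0 ≤ g x := mul_nonneg (hw₀ x hx) (exp_pos _).le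
    have hd : 0 < d := by
      by_contra! hd
      nlinarith [mul_nonpos_of_nonpos_of_nonneg hd hgx]
    have hay : a ≤ d * g y := hax.le.trans (mul_le_mul_of_nonneg_left (hg hx hy hxy) hd.le)
    exact mul_nonneg (mul_nonneg (hβ y hy) (exp_pos _).le) (by linarith)

theorem hasDerivAt_Ifun {u δ : ℝ} (hu : -1 < u) (hδ : 0 ≤ δ) :
    HasDerivAt (fun v => Ifun v δ) (δ * (u ^ δ / (1 + u))) u := by
  have hcont : ContinuousOn (fun t : ℝ => t ^ δ / (1 + t)) (Ioi (-1)) :=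
    (continuous_rpow_const hδ).continuousOn.div (by fun_prop) fun t ht => by
      rw [mem_Ioi] at ht; linarith
  have hsub : uIcc 0 u ⊆ Ioi (-1) := fun t ht =>
    lt_of_lt_of_le (lt_min (by norm_num) hu) ht.1
  exact (intervalIntegral.integral_hasDerivAt_right (hcont.mono hsub).intervalIntegrable
    (hcont.stronglyMeasurableAtFilter isOpen_Ioi u hu)
    (hcont.continuousAt (Ioi_mem_nhds hu))).const_mul δ

theorem hasDerivAt_Ifun_rpow_div {r α σ δ : ℝ} (hr : 0 < r) (hσ : 0 < σ) (hδ : 0 ≤ δ) :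
    HasDerivAt (fun x => σ ^ δ * Ifun (x ^ α / σ) δ)
      (δ * α * r ^ (δ * α - 1) * (r ^ α / (σ + r ^ α))) r := by
  have hu : 0 < r ^ α / σ := by positivity
  have h := ((hasDerivAt_Ifun (by linarith) hδ).comp r
    ((hasDerivAt_rpow_const (p := α) (Or.inl hr.ne')).div_const σ)).const_mul (σ ^ δ)
  refine h.congr_deriv ?_
  have hrα : 0 < r ^ α := rpow_pos_of_pos hr α
  rw [div_rpow hrα.le hσ.le, ← rpow_mul hr.le, rpow_sub hr, rpow_sub hr, rpow_one,
    mul_comm α δ]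
  field_simp

theorem monotoneOn_rpow_div_add_rpow {α σ : ℝ} (hα : 0 ≤ α) (hσ : 0 < σ) :
    MonotoneOn (fun r => r ^ α / (σ + r ^ α)) (Ici 0) := by
  intro x hx y _ hxy
  have hxα : 0 ≤ x ^ α := rpow_nonneg hx α
  have hxy' : x ^ α ≤ y ^ α := rpow_le_rpow hx hxy hα
  rw [div_le_div_iff₀ (by positivity) (by linarith)]
  nlinarith

theorem bayes_risk_quasiconvex_general
    (n : ℕ) (α : ℝ) (hα : (n : ℝ) < α) (δ : ℝ) (hδ : δ = (n : ℝ) / α)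
    (lam c σ : ℝ) (hlam : 0 < lam) (hc : 0 < c) (hσ : 0 < σ)
    (c00 c01 c10 c11 : ℝ)
    (h10 : c00 < c10)
    (A : ℝ) (B C R : ℝ → ℝ)
    (hB : ∀ r, B r = lam * c * r ^ (n : ℝ))
    (hC : ∀ r, C r = lam * c * σ ^ δ * Ifun (r ^ α / σ) δ)
    (hR : ∀ r, R r = c00 + (c01 - c00) * Real.exp (-A) + (c10 - c00) * Real.exp (-(B r))
        + (c11 + c00 - c10 - c01) * Real.exp (-A - C r)) :
    QuasiconvexOn ℝ (Set.Ioi (0:ℝ)) R := by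
  have hα₀ : 0 < α := (Nat.cast_nonneg n).trans_lt hα
  have hδ₀ : 0 ≤ δ := hδ ▸ by positivity
  have hδα : δ * α = n := by rw [hδ]; field_simp
  have hR' : R = fun r => (c00 + (c01 - c00) * exp (-A)) + (c10 - c00) * exp (-B r)
      - (c10 + c01 - c00 - c11) * exp (-(A + C r)) := funext fun r => by rw [hR, neg_add']; ring
  rw [hR']
  refine quasiconvexOn_add_mul_exp_sub_mul_exp (convex_Ioi 0)
    (β := fun r => lam * c * (n * r ^ ((n : ℝ) - 1))) (w := fun r => r ^ α / (σ + r ^ α))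
    (fun r hr => ?_) (fun r hr => ?_) (fun r (hr : 0 < r) => by positivity)
    (fun r (hr : 0 < r) => by positivity)
    (fun r (hr : 0 < r) => div_le_one_of_le₀ (by linarith) (by positivity))
    ((monotoneOn_rpow_div_add_rpow hα₀.le hσ).mono Ioi_subset_Ici_self) _ (by linarith) _
  · rw [funext hB]
    exact (hasDerivAt_rpow_const (Or.inl (ne_of_gt hr))).const_mul _
  · have hC' : (fun r => A + C r) = fun r => A + lam * c * (σ ^ δ * Ifun (r ^ α / σ) δ) :=
      funext fun r => by rw [hC, mul_assoc]
    rw [hC']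
    refine (((hasDerivAt_Ifun_rpow_div hr hσ hδ₀).const_mul (lam * c)).const_add A).congr_deriv
      (by rw [hδα]; ring)

theorem bayes_risk_quasiconvex
    (n : ℕ) (hn : 0 < n) (α : ℝ) (hα : (n : ℝ) < α) (δ : ℝ) (hδ : δ = (n : ℝ) / α)
    (lam c σ η : ℝ) (hlam : 0 < lam) (hc : 0 < c) (hσ : 0 < σ) (hη : 0 ≤ η)
    (c00 c01 c10 c11 : ℝ) (hc00 : 0 ≤ c00) (hc01 : 0 ≤ c01) (hc10 : 0 ≤ c10) (hc11 : 0 ≤ c11)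
    (h10 : c00 < c10) (h01 : c11 < c01)
    (A : ℝ) (B C R : ℝ → ℝ)
    (hA : A = lam * c * kappa δ * σ ^ δ + σ * η)
    (hB : ∀ r, B r = lam * c * r ^ (n : ℝ))
    (hC : ∀ r, C r = lam * c * σ ^ δ * Ifun (r ^ α / σ) δ)
    (hR : ∀ r, R r = c00 + (c01 - c00) * Real.exp (-A) + (c10 - c00) * Real.exp (-(B r))
        + (c11 + c00 - c10 - c01) * Real.exp (-A - C r)) :
    QuasiconvexOn ℝ (Set.Ioi (0:ℝ)) R :=
  bayes_risk_quasiconvex_general n α hα δ hδ lam c σ hlam hc hσ c00 c01 c10 c11 h10 A B C R hB hC hR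
end

section
/- Let δ ∈ (0,1). Then for every χ ≥ 0, (1 + χ)·(κ_δ + I(χ,δ)) − χ^{δ+1} > 0. -/
open Real Filter Set MeasureTheory

/-! Since `t ^ (δ - 1) / (1 + t) + t ^ δ / (1 + t) = t ^ (δ - 1)`, the truncation of `κ_δ` at `χ`
plus `I(χ, δ)` equals `δ ∫₀^χ t ^ (δ - 1) dt = χ ^ δ`. The integrand of `κ_δ` is positive on `(χ, ∞)`,
so `κ_δ + I(χ, δ) > χ ^ δ`, and multiplying by `1 + χ` gives more than `χ ^ δ + χ ^ (δ + 1)`. -/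

lemma continuousOn_rpow_div_one_add (a : ℝ) :
    ContinuousOn (fun t : ℝ => t ^ a / (1 + t)) (Ioi 0) :=
  ((continuousOn_id.rpow_const fun t ht => Or.inl (ne_of_gt ht)).div
    (continuousOn_const.add continuousOn_id) fun t (ht : 0 < t) => by positivity)

lemma integrableOn_rpow_div_one_add_Ioi {a : ℝ} (ha₁ : -1 < a) (ha₂ : a < 0) :
    IntegrableOn (fun t : ℝ => t ^ a / (1 + t)) (Ioi 0) := by
  have dominated : ∀ {s : Set ℝ} {g : ℝ → ℝ}, MeasurableSet s → s ⊆ Ioi 0 → IntegrableOn g s →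
      (∀ t ∈ s, t ^ a / (1 + t) ≤ g t) → IntegrableOn (fun t : ℝ => t ^ a / (1 + t)) s :=
    fun hs hs₀ hg hle => hg.mono' ((continuousOn_rpow_div_one_add a).mono hs₀
      |>.aestronglyMeasurable hs) <| ae_restrict_of_forall_mem hs fun t ht => by
        have ht₀ : 0 < t := hs₀ ht
        rw [Real.norm_of_nonneg (by positivity)]
        exact hle t ht
  rw [← Ioc_union_Ioi_eq_Ioi zero_le_one]
  refine (dominated (g := fun t => t ^ a) measurableSet_Ioc Ioc_subset_Ioi_self ?_
    fun t ht => ?_).union (dominated (g := fun t => t ^ (a - 1)) measurableSet_Ioi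
      (Ioi_subset_Ioi zero_le_one) ?_ fun t ht => ?_)
  · exact (intervalIntegrable_iff_integrableOn_Ioc_of_le zero_le_one).1
      (intervalIntegral.intervalIntegrable_rpow' ha₁)
  · have ht₀ : 0 < t := ht.1
    exact div_le_self (by positivity) (by linarith)
  · exact integrableOn_Ioi_rpow_of_lt (by linarith : a - 1 < -1) one_pos
  · have ht₀ : 0 < t := zero_lt_one.trans ht
    rw [rpow_sub ht₀, rpow_one]
    exact div_le_div_of_nonneg_left (by positivity) ht₀ (by linarith)

lemma intervalIntegral_lt_setIntegral_Ioi {f : ℝ → ℝ} {a b : ℝ} (hab : a ≤ b)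
    (hf : IntegrableOn f (Ioi a)) (hpos : ∀ t ∈ Ioi a, 0 < f t) :
    ∫ t in a..b, f t < ∫ t in Ioi a, f t := by
  have hb : Ioi b ⊆ Ioi a := Ioi_subset_Ioi hab
  have tail_pos : 0 < ∫ t in Ioi b, f t := by
    rw [setIntegral_pos_iff_support_of_nonneg_ae
      (ae_restrict_of_forall_mem measurableSet_Ioi fun t ht => (hpos t (hb ht)).le)
      (hf.mono_set hb)]
    exact (by simp : 0 < volume (Ioi b)).trans_le
      (measure_mono fun t ht => ⟨(hpos t (hb ht)).ne', ht⟩)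
  rw [intervalIntegral.integral_of_le hab, ← Ioc_union_Ioi_eq_Ioi hab,
    setIntegral_union Ioc_disjoint_Ioi_same measurableSet_Ioi
      (hf.mono_set Ioc_subset_Ioi_self) (hf.mono_set hb)]
  linarith

lemma integral_rpow_div_one_add_add_integral_rpow_add_one_div_one_add {a χ : ℝ} (ha : -1 < a)
    (hχ : 0 ≤ χ) :
    (∫ t in (0:ℝ)..χ, t ^ a / (1 + t)) + ∫ t in (0:ℝ)..χ, t ^ (a + 1) / (1 + t)
      = χ ^ (a + 1) / (a + 1) := by
  have one_add_pos : ∀ t ∈ uIcc 0 χ, 0 < 1 + t := fun t ht => by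
    rw [uIcc_of_le hχ] at ht; linarith [ht.1]
  have integrable : ∀ b : ℝ, -1 < b →
      IntervalIntegrable (fun t : ℝ => t ^ b / (1 + t)) volume 0 χ := fun b hb => by
    have hinv : ContinuousOn (fun t : ℝ => (1 + t)⁻¹) (uIcc 0 χ) :=
      ContinuousOn.inv₀ (by fun_prop) fun t ht => (one_add_pos t ht).ne'
    simpa only [div_eq_mul_inv] using
      (intervalIntegral.intervalIntegrable_rpow' hb).mul_continuousOn hinv
  have sum_eq : EqOn (fun t : ℝ => t ^ a / (1 + t) + t ^ (a + 1) / (1 + t)) (fun t => t ^ a)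
      (uIcc 0 χ) := fun t ht => by
    have h₁ := one_add_pos t ht
    rw [uIcc_of_le hχ] at ht
    simp only [rpow_add_one' ht.1 (by linarith : a + 1 ≠ 0)]
    field_simp
  rw [← intervalIntegral.integral_add (integrable a ha) (integrable (a + 1) (by linarith)),
    intervalIntegral.integral_congr sum_eq, integral_rpow (Or.inl ha),
    zero_rpow (by linarith : a + 1 ≠ 0), sub_zero]

theorem sensitivity_sigma_factor_pos
    (δ : ℝ) (hδ : δ ∈ Set.Ioo (0:ℝ) 1) :
    ∀ χ : ℝ, 0 ≤ χ → 0 < (1 + χ) * (kappa δ + Ifun χ δ) - χ ^ (δ + 1) := by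
  obtain ⟨hδ₀, hδ₁⟩ := hδ
  intro χ hχ
  have head_lt_kappa : δ * ∫ t in (0:ℝ)..χ, t ^ (δ - 1) / (1 + t) < kappa δ :=
    mul_lt_mul_of_pos_left (intervalIntegral_lt_setIntegral_Ioi hχ
      (integrableOn_rpow_div_one_add_Ioi (by linarith) (by linarith))
      fun t (ht : 0 < t) => by positivity) hδ₀
  have rpow_lt : χ ^ δ < kappa δ + Ifun χ δ := by
    have h := integral_rpow_div_one_add_add_integral_rpow_add_one_div_one_add
      (by linarith : -1 < δ - 1) hχ
    rw [sub_add_cancel] at h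
    calc χ ^ δ = δ * (χ ^ δ / δ) := by field_simp
      _ = δ * (∫ t in (0:ℝ)..χ, t ^ (δ - 1) / (1 + t)) + Ifun χ δ := by rw [← h, mul_add, Ifun]
      _ < kappa δ + Ifun χ δ := by linarith
  refine sub_pos.2 <| calc
    χ ^ (δ + 1) = χ * χ ^ δ := by rw [rpow_add_one' hχ (by linarith), mul_comm]
    _ < (1 + χ) * (kappa δ + Ifun χ δ) := by nlinarith [rpow_nonneg hχ δ]
end

section
/- Let n be a positive natural number, α > n a real number, δ = n/α, and let q > 0 and r₀ > 0 be real numbers. Then n·∫_{r₀}^∞ (1 − e^{−q·r^{−α}})·r^{n−1} dr = −r₀^n + q^δ·Γ(1−δ) + r₀^n·δ·E(1+δ, q·r₀^{−α}), where Γ is the Gamma function and E(v,u) = ∫₁^∞ e^{−u·t}·t^{−v} dt. -/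
/-!
Integrating by parts against `d(r^n)` leaves the boundary term `-(1 - e^{-u₀}) r₀^n`,
where `u₀ = q r₀^{-α}`, plus `qα ∫_{r₀}^∞ e^{-q r^{-α}} r^{n-α-1} dr`; the substitution
`x = q r^{-α}` turns the latter into `q^δ ∫_0^{u₀} e^{-x} x^{-δ} dx`. This lower
incomplete Gamma integral is `Γ(1-δ)` minus the tail `u₀^{1-δ} E(δ, u₀)`, and the
recurrence `δ E(1+δ, u) + u E(δ, u) = e^{-u}` (one more integration by parts) rewrites
the tail through `E(1+δ, u₀)`. Finally `q^δ u₀^{-δ} = r₀^n`.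
-/

open Real Filter Set MeasureTheory
open scoped Topology

/-- Generalized exponential integral `E(v,u) = ∫₁^∞ e^{-u·t} t^{-v} dt`. -/
noncomputable def genExpInt (v u : ℝ) : ℝ := ∫ t in Set.Ioi (1:ℝ), Real.exp (-(u * t)) * t ^ (-v)

lemma one_sub_exp_neg_mul_rpow_neg_nonneg {q r : ℝ} (hq : 0 ≤ q) (hr : 0 ≤ r) (α : ℝ) :
    0 ≤ 1 - exp (-(q * r ^ (-α))) :=
  sub_nonneg.2 (exp_le_one_iff.2 (neg_nonpos.2 (by positivity)))

lemma one_sub_exp_neg_mul_rpow_neg_mul_rpow_le {q r : ℝ} (hr : 0 < r) (α s : ℝ) :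
    (1 - exp (-(q * r ^ (-α)))) * r ^ s ≤ q * r ^ (s - α) := by
  calc (1 - exp (-(q * r ^ (-α)))) * r ^ s ≤ q * r ^ (-α) * r ^ s :=
        mul_le_mul_of_nonneg_right (by linarith [one_sub_le_exp_neg (q * r ^ (-α))])
          (rpow_nonneg hr.le _)
    _ = q * r ^ (s - α) := by rw [mul_assoc, ← rpow_add hr, neg_add_eq_sub]

section
variable {q α s r₀ : ℝ}

lemma integrableOn_one_sub_exp_neg_mul_rpow_neg_mul_rpow (hq : 0 ≤ q) (hsα : s < α)
    (hr₀ : 0 < r₀) :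
    IntegrableOn (fun r => (1 - exp (-(q * r ^ (-α)))) * r ^ (s - 1)) (Ioi r₀) := by
  have hdom := (integrableOn_Ioi_rpow_of_lt (a := s - 1 - α) (by linarith) hr₀).const_mul q
  refine Integrable.mono' hdom (by fun_prop) ?_
  filter_upwards [ae_restrict_mem measurableSet_Ioi] with r (hr : r₀ < r)
  have hr0 : 0 < r := hr₀.trans hr
  rw [norm_of_nonneg (mul_nonneg (one_sub_exp_neg_mul_rpow_neg_nonneg hq hr0.le α)
    (rpow_nonneg hr0.le _))]
  exact one_sub_exp_neg_mul_rpow_neg_mul_rpow_le hr0 α _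

lemma integrableOn_exp_neg_mul_rpow_neg_mul_rpow (hq : 0 ≤ q) (hsα : s < α) (hr₀ : 0 < r₀) :
    IntegrableOn (fun r => exp (-(q * r ^ (-α))) * r ^ (s - α - 1)) (Ioi r₀) := by
  have hdom := integrableOn_Ioi_rpow_of_lt (a := s - α - 1) (by linarith) hr₀
  refine Integrable.mono' hdom (by fun_prop) ?_
  filter_upwards [ae_restrict_mem measurableSet_Ioi] with r (hr : r₀ < r)
  have hr0 : 0 < r := hr₀.trans hr
  rw [norm_of_nonneg (by positivity)]
  exact mul_le_of_le_one_left (rpow_nonneg hr0.le _)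
    (exp_le_one_iff.2 (neg_nonpos.2 (by positivity)))

theorem mul_integral_one_sub_exp_neg_mul_rpow_neg_mul_rpow (hq : 0 ≤ q) (hsα : s < α)
    (hr₀ : 0 < r₀) :
    s * ∫ r in Ioi r₀, (1 - exp (-(q * r ^ (-α)))) * r ^ (s - 1)
      = q * α * (∫ r in Ioi r₀, exp (-(q * r ^ (-α))) * r ^ (s - α - 1))
        - (1 - exp (-(q * r₀ ^ (-α)))) * r₀ ^ s := by
  have hderiv : ∀ r ∈ Ici r₀, HasDerivAt (fun r => (1 - exp (-(q * r ^ (-α)))) * r ^ s)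
      (s * ((1 - exp (-(q * r ^ (-α)))) * r ^ (s - 1))
        - q * α * (exp (-(q * r ^ (-α))) * r ^ (s - α - 1))) r := by
    intro r hr
    have hr0 : 0 < r := hr₀.trans_le hr
    have hexp := ((hasDerivAt_rpow_const (p := -α) (Or.inl hr0.ne')).const_mul q).neg.exp
    refine ((hexp.const_sub 1).mul (hasDerivAt_rpow_const (Or.inl hr0.ne'))).congr_deriv ?_
    rw [show s - α - 1 = (-α - 1) + s by ring, rpow_add hr0]
    simp only [Pi.neg_apply]
    ring
  have hlim : Tendsto (fun r => (1 - exp (-(q * r ^ (-α)))) * r ^ s) atTop (𝓝 0) := by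
    have hdecay : Tendsto (fun r : ℝ => q * r ^ (s - α)) atTop (𝓝 0) := by
      simpa [neg_sub] using (tendsto_rpow_neg_atTop (sub_pos.2 hsα)).const_mul q
    refine squeeze_zero' ?_ ?_ hdecay <;> filter_upwards [eventually_gt_atTop 0] with r hr
    · exact mul_nonneg (one_sub_exp_neg_mul_rpow_neg_nonneg hq hr.le α) (rpow_nonneg hr.le _)
    · exact one_sub_exp_neg_mul_rpow_neg_mul_rpow_le hr α s
  have hint₁ := (integrableOn_one_sub_exp_neg_mul_rpow_neg_mul_rpow hq hsα hr₀).const_mul s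
  have hint₂ := (integrableOn_exp_neg_mul_rpow_neg_mul_rpow hq hsα hr₀).const_mul (q * α)
  have h := integral_Ioi_of_hasDerivAt_of_tendsto' hderiv (hint₁.sub hint₂) hlim
  rw [integral_sub hint₁ hint₂, integral_const_mul, integral_const_mul] at h
  linarith

end

theorem strictAntiOn_mul_rpow_neg {q α : ℝ} (hq : 0 < q) (hα : 0 < α) :
    StrictAntiOn (fun r : ℝ => q * r ^ (-α)) (Ioi 0) := fun _ ha _ _ hab =>
  mul_lt_mul_of_pos_left (rpow_lt_rpow_of_neg ha hab (neg_lt_zero.mpr hα)) hq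

theorem image_mul_rpow_neg_Ioi {q α r₀ : ℝ} (hq : 0 < q) (hα : 0 < α) (hr₀ : 0 < r₀) :
    (fun r : ℝ => q * r ^ (-α)) '' Ioi r₀ = Ioo 0 (q * r₀ ^ (-α)) := by
  ext x
  constructor
  · rintro ⟨r, hr, rfl⟩
    have hr0 : 0 < r := hr₀.trans hr
    exact ⟨by positivity, strictAntiOn_mul_rpow_neg hq hα hr₀ hr0 hr⟩
  · rintro ⟨hx, hxu⟩
    have hxq : 0 < x / q := div_pos hx hq
    have hinv : (-α) * (-α⁻¹) = 1 := by field_simp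
    refine ⟨(x / q) ^ (-α⁻¹), ?_, ?_⟩
    · have h := rpow_lt_rpow_of_neg hxq ((div_lt_iff₀' hq).2 hxu) (neg_lt_zero.2 (inv_pos.2 hα))
      rwa [← rpow_mul hr₀.le, hinv, rpow_one] at h
    · dsimp only
      rw [← rpow_mul hxq.le, mul_comm (-α⁻¹), hinv, rpow_one, mul_div_cancel₀ _ hq.ne']

theorem integral_Ioo_eq_integral_Ioi_comp_mul_rpow_neg (g : ℝ → ℝ) {q α r₀ : ℝ}
    (hq : 0 < q) (hα : 0 < α) (hr₀ : 0 < r₀) :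
    ∫ x in Ioo 0 (q * r₀ ^ (-α)), g x =
      ∫ r in Ioi r₀, q * α * r ^ (-α - 1) * g (q * r ^ (-α)) := by
  have hderiv : ∀ r ∈ Ioi r₀, HasDerivWithinAt (fun r : ℝ => q * r ^ (-α))
      (q * (-α * r ^ (-α - 1))) (Ioi r₀) r := fun r hr =>
    ((hasDerivAt_rpow_const (Or.inl (hr₀.trans hr).ne')).const_mul q).hasDerivWithinAt
  have hinj := (strictAntiOn_mul_rpow_neg hq hα).injOn.mono (Ioi_subset_Ioi hr₀.le)
  rw [← image_mul_rpow_neg_Ioi hq hα hr₀,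
    integral_image_eq_integral_abs_deriv_smul measurableSet_Ioi hderiv hinj]
  refine setIntegral_congr_fun measurableSet_Ioi fun r (hr : r₀ < r) => ?_
  have : 0 < r ^ (-α - 1) := rpow_pos_of_pos (hr₀.trans hr) _
  rw [smul_eq_mul, abs_of_neg (by nlinarith [mul_pos hq hα])]
  ring

theorem mul_integral_exp_neg_mul_rpow_neg_mul_rpow {q α r₀ : ℝ} (hq : 0 < q) (hα : 0 < α)
    (hr₀ : 0 < r₀) (s : ℝ) :
    q * α * ∫ r in Ioi r₀, exp (-(q * r ^ (-α))) * r ^ (s - α - 1)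
      = q ^ (s / α) * ∫ x in Ioo 0 (q * r₀ ^ (-α)), exp (-x) * x ^ (-(s / α)) := by
  rw [integral_Ioo_eq_integral_Ioi_comp_mul_rpow_neg _ hq hα hr₀, ← integral_const_mul,
    ← integral_const_mul]
  refine setIntegral_congr_fun measurableSet_Ioi fun r (hr : r₀ < r) => ?_
  have hr0 : 0 < r := hr₀.trans hr
  have hpow : (q * r ^ (-α)) ^ (-(s / α)) = q ^ (-(s / α)) * r ^ s := by
    rw [mul_rpow hq.le (rpow_nonneg hr0.le _), ← rpow_mul hr0.le, neg_mul_neg,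
      mul_div_cancel₀ _ hα.ne']
  have hq1 : q ^ (s / α) * q ^ (-(s / α)) = 1 := by
    rw [← rpow_add hq, add_neg_cancel, rpow_zero]
  rw [hpow, show s - α - 1 = (-α - 1) + s by ring, rpow_add hr0]
  linear_combination (-(q * α * r ^ (-α - 1) * exp (-(q * r ^ (-α))) * r ^ s)) * hq1

lemma integrableOn_exp_neg_mul_mul_rpow_Ioi_one {u b : ℝ} (hu : 0 < u) (hb : b ≤ 0) :
    IntegrableOn (fun t : ℝ => exp (-(u * t)) * t ^ b) (Ioi 1) := by
  refine Integrable.mono' (exp_neg_integrableOn_Ioi 1 hu) (by fun_prop) ?_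
  filter_upwards [ae_restrict_mem measurableSet_Ioi] with t (ht : 1 < t)
  rw [norm_of_nonneg (by positivity), neg_mul]
  exact mul_le_of_le_one_right (exp_nonneg _) (rpow_le_one_of_one_le_of_nonpos ht.le hb)

theorem genExpInt_recurrence {u v : ℝ} (hu : 0 < u) (hv : 0 ≤ v) :
    v * genExpInt (1 + v) u + u * genExpInt v u = exp (-u) := by
  have hderiv : ∀ t ∈ Ici (1 : ℝ), HasDerivAt (fun t => -(exp (-(u * t)) * t ^ (-v)))
      (v * (exp (-(u * t)) * t ^ (-(1 + v))) + u * (exp (-(u * t)) * t ^ (-v))) t := by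
    intro t ht
    have ht0 : 0 < t := zero_lt_one.trans_le ht
    refine ((((hasDerivAt_id t).const_mul u).neg.exp).mul
      (hasDerivAt_rpow_const (p := -v) (Or.inl ht0.ne'))).neg.congr_deriv ?_
    rw [show -(1 + v) = -v - 1 by ring]
    simp only [Pi.neg_apply, id]
    ring
  have hlim : Tendsto (fun t : ℝ => -(exp (-(u * t)) * t ^ (-v))) atTop (𝓝 0) := by
    simpa [mul_comm, neg_mul] using (tendsto_rpow_mul_exp_neg_mul_atTop_nhds_zero (-v) u hu).neg
  have hint₁ :=
    (integrableOn_exp_neg_mul_mul_rpow_Ioi_one hu (b := -(1 + v)) (by linarith)).const_mul v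
  have hint₂ :=
    (integrableOn_exp_neg_mul_mul_rpow_Ioi_one hu (b := -v) (by linarith)).const_mul u
  have h := integral_Ioi_of_hasDerivAt_of_tendsto' hderiv (hint₁.add hint₂) hlim
  rw [integral_add hint₁ hint₂, integral_const_mul, integral_const_mul] at h
  simpa [genExpInt] using h

theorem integral_Ioi_exp_neg_mul_rpow_neg {u : ℝ} (hu : 0 < u) (v : ℝ) :
    ∫ x in Ioi u, exp (-x) * x ^ (-v) = u ^ (1 - v) * genExpInt v u := by
  rw [← mul_one u, ← integral_comp_mul_left_Ioi' _ 1 hu, genExpInt, smul_eq_mul, mul_one,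
    ← integral_const_mul, ← integral_const_mul]
  refine setIntegral_congr_fun measurableSet_Ioi fun t (ht : 1 < t) => ?_
  rw [mul_rpow hu.le (zero_le_one.trans ht.le), rpow_sub hu, rpow_one, rpow_neg hu.le]
  field_simp

theorem Gamma_eq_integral_Ioo_add_integral_Ioi {s u : ℝ} (hs : 0 < s) (hu : 0 ≤ u) :
    Gamma s =
      (∫ x in Ioo 0 u, exp (-x) * x ^ (s - 1)) + ∫ x in Ioi u, exp (-x) * x ^ (s - 1) := by
  have hconv := GammaIntegral_convergent hs
  rw [Gamma_eq_integral hs, ← Ioc_union_Ioi_eq_Ioi hu, ← integral_Ioc_eq_integral_Ioo,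
    setIntegral_union (Ioc_disjoint_Ioi le_rfl) measurableSet_Ioi
      (hconv.mono_set Ioc_subset_Ioi_self) (hconv.mono_set (Ioi_subset_Ioi hu))]

theorem integral_Ioo_exp_neg_mul_rpow_neg {u δ : ℝ} (hu : 0 < u) (hδ₀ : 0 ≤ δ)
    (hδ₁ : δ < 1) :
    ∫ x in Ioo 0 u, exp (-x) * x ^ (-δ)
      = Gamma (1 - δ) - u ^ (-δ) * (exp (-u) - δ * genExpInt (1 + δ) u) := by
  have hsplit := Gamma_eq_integral_Ioo_add_integral_Ioi (s := 1 - δ) (by linarith) hu.le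
  have hpow : u ^ (1 - δ) = u ^ (-δ) * u := by rw [← rpow_add_one hu.ne']; ring_nf
  rw [sub_sub_cancel_left, integral_Ioi_exp_neg_mul_rpow_neg hu, hpow] at hsplit
  linear_combination -hsplit - u ^ (-δ) * genExpInt_recurrence hu hδ₀

theorem interference_integral_identity_general
    (n : ℕ) (α : ℝ) (hα : (n : ℝ) < α) (δ : ℝ) (hδ : δ = (n : ℝ) / α)
    (q r₀ : ℝ) (hq : 0 < q) (hr₀ : 0 < r₀) :
    (n : ℝ) * ∫ r in Set.Ioi r₀, (1 - Real.exp (-(q * r ^ (-α)))) * r ^ ((n : ℝ) - 1) =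
      -(r₀ ^ (n : ℝ)) + q ^ δ * Real.Gamma (1 - δ)
        + r₀ ^ (n : ℝ) * δ * genExpInt (1 + δ) (q * r₀ ^ (-α)) := by
  have hα₀ : 0 < α := (Nat.cast_nonneg n).trans_lt hα
  have hδ₀ : 0 ≤ δ := hδ ▸ by positivity
  have hδ₁ : δ < 1 := hδ ▸ (div_lt_one hα₀).2 hα
  have hu₀ : 0 < q * r₀ ^ (-α) := by positivity
  have hscale : q ^ δ * (q * r₀ ^ (-α)) ^ (-δ) = r₀ ^ (n : ℝ) := by
    rw [mul_rpow hq.le (rpow_nonneg hr₀.le _), ← mul_assoc, ← rpow_add hq, add_neg_cancel,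
      rpow_zero, one_mul, ← rpow_mul hr₀.le, neg_mul_neg, hδ, mul_div_cancel₀ _ hα₀.ne']
  rw [mul_integral_one_sub_exp_neg_mul_rpow_neg_mul_rpow hq.le hα hr₀,
    mul_integral_exp_neg_mul_rpow_neg_mul_rpow hq hα₀ hr₀, ← hδ,
    integral_Ioo_exp_neg_mul_rpow_neg hu₀ hδ₀ hδ₁]
  linear_combination
    (δ * genExpInt (1 + δ) (q * r₀ ^ (-α)) - exp (-(q * r₀ ^ (-α)))) * hscale

theorem interference_integral_identity
    (n : ℕ) (hn : 0 < n) (α : ℝ) (hα : (n : ℝ) < α) (δ : ℝ) (hδ : δ = (n : ℝ) / α)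
    (q r₀ : ℝ) (hq : 0 < q) (hr₀ : 0 < r₀) :
    (n : ℝ) * ∫ r in Set.Ioi r₀, (1 - Real.exp (-(q * r ^ (-α)))) * r ^ ((n : ℝ) - 1) =
      -(r₀ ^ (n : ℝ)) + q ^ δ * Real.Gamma (1 - δ)
        + r₀ ^ (n : ℝ) * δ * genExpInt (1 + δ) (q * r₀ ^ (-α)) :=
  interference_integral_identity_general n α hα δ hδ q r₀ hq hr₀
end

section
/- Let 0 < a < 1 and ν > 0 be real numbers and k, l ∈ ℕ. Then ∑_{m=0}^∞ (a^m)^k·(1 − a^m)^l·Po(m;ν) = ∑_{j=0}^l C(l,j)·(−1)^j·e^{−ν·(1 − a^{k+j})}, where C(l,j) is the binomial coefficient. Equivalently, for M ~ Po(ν), E[(a^M)^k·(1 − a^M)^l] = f_d(ν,a;k,l). -/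
open Real Filter Set MeasureTheory

/-- Poisson PMF with parameter `ν` evaluated at `m`. -/
noncomputable def poissonPMF (ν : ℝ) (m : ℕ) : ℝ :=
  Real.exp (-ν) * ν ^ m / (Nat.factorial m : ℝ)

/-- `fd ν a k l = ∑_{j=0}^l C(l,j)·(−1)^j·e^{−ν(1−a^{k+j})}`. -/
noncomputable def fd (ν a : ℝ) (k l : ℕ) : ℝ :=
  ∑ j ∈ Finset.range (l + 1),
    (Nat.choose l j : ℝ) * (-1) ^ j * Real.exp (-(ν * (1 - a ^ (k + j))))

/-!
Expanding `(1 - x)^l` by the binomial theorem turns `x^k (1 - x)^l` into a signed combination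
of the powers `x^(k+j)`, so with `x = a^M` the expectation is a finite combination of values
`E[c^M]` of the Poisson probability generating function, and `E[c^M] = e^{-ν(1-c)}`.
-/

lemma one_sub_pow_eq_sum {R : Type*} [CommRing R] (x : R) (l : ℕ) :
    (1 - x) ^ l = ∑ j ∈ Finset.range (l + 1), (l.choose j : R) * (-1) ^ j * x ^ j := by
  rw [sub_eq_neg_add, add_pow]
  refine Finset.sum_congr rfl fun j _ => ?_
  rw [neg_pow, one_pow]
  ring

lemma pow_mul_one_sub_pow_eq_sum {R : Type*} [CommRing R] (x : R) (k l : ℕ) :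
    x ^ k * (1 - x) ^ l =
      ∑ j ∈ Finset.range (l + 1), (l.choose j : R) * (-1) ^ j * x ^ (k + j) := by
  rw [one_sub_pow_eq_sum, Finset.mul_sum]
  refine Finset.sum_congr rfl fun j _ => ?_
  rw [pow_add]
  ring

lemma hasSum_pow_mul_poissonPMF (ν c : ℝ) :
    HasSum (fun m : ℕ => c ^ m * poissonPMF ν m) (Real.exp (-(ν * (1 - c)))) := by
  have hterm : (fun m : ℕ => c ^ m * poissonPMF ν m) =
      fun m => Real.exp (-ν) * ((c * ν) ^ m / m.factorial) := by
    ext m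
    rw [poissonPMF, mul_pow]
    ring
  rw [hterm, show -(ν * (1 - c)) = -ν + c * ν by ring, Real.exp_add, Real.exp_eq_exp_ℝ]
  exact (NormedSpace.expSeries_div_hasSum_exp (c * ν)).mul_left _

theorem poisson_moment_identity_general
    (a ν : ℝ) (k l : ℕ) :
    ∑' m : ℕ, (a ^ m) ^ k * (1 - a ^ m) ^ l * poissonPMF ν m = fd ν a k l := by
  have hterm : ∀ m : ℕ, (a ^ m) ^ k * (1 - a ^ m) ^ l * poissonPMF ν m =
      ∑ j ∈ Finset.range (l + 1),
        (l.choose j : ℝ) * (-1) ^ j * ((a ^ (k + j)) ^ m * poissonPMF ν m) := by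
    intro m
    rw [pow_mul_one_sub_pow_eq_sum, Finset.sum_mul]
    refine Finset.sum_congr rfl fun j _ => ?_
    rw [pow_right_comm]
    ring
  simp only [hterm]
  exact (hasSum_sum fun j _ => (hasSum_pow_mul_poissonPMF ν _).mul_left _).tsum_eq

theorem poisson_moment_identity
    (a ν : ℝ) (ha0 : 0 < a) (ha1 : a < 1) (hν : 0 < ν) (k l : ℕ) :
    ∑' m : ℕ, (a ^ m) ^ k * (1 - a ^ m) ^ l * poissonPMF ν m = fd ν a k l :=
  poisson_moment_identity_general a ν k l
end
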